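/- arXiv:1108.4031 — 6 statements merged into one kernel-verified Lean document; each statement's English description precedes it below -/
import Mathlib

section
/- Let $u_0,\dots,u_{m-1},v_0,\dots,v_{m-1}$ be elements of a field with $1+u_iv_j\neq 0$ for all $i,j$, and let $M$ be the $m\times m$ matrix with entries $M_{ij}=\frac{u_i+v_j}{1+u_iv_j}$. Then $\det M = \frac{1}{2}\Big(\prod_{i=0}^{m-1}(1+u_i)\prod_{j=0}^{m-1}(1+v_j) + (-1)^m\prod_{i=0}^{m-1}(1-u_i)\prod_{j=0}^{m-1}(1-v_j)\Big) \cdot \prod_{0\le i<j\le m-1}(u_i-u_j)\prod_{0\le i<j\le m-1}(v_j-v_i)\prod_{i,j=0}^{m-1}(1+u_iv_j)^{-1}$. -/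
/-!
Adding or subtracting the all-ones matrix `J` turns `M` into a row and column rescaling of
the Cauchy matrix `C = ((1 + uᵢ vⱼ)⁻¹)`, since
`(u + v) / (1 + u v) ± 1 = ±(1 ± u)(1 ± v) / (1 + u v)`.
As `det (M + t J)` is affine in `t`, `det M` is the average of `det (M + J)` and `det (M - J)`.
The Cauchy determinant itself follows by induction, pivoting on the corner entry: the Schur
complement of `C₀₀` is again a rescaled Cauchy matrix in the remaining variables.
-/

open Matrix Finset

section

variable {n R : Type*} [Fintype n] [DecidableEq n] [CommRing R]

theorem det_of_mul_mul (a b : n → R) (C : Matrix n n R) :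
    (of fun i j => a i * b j * C i j).det = (∏ i, a i) * (∏ j, b j) * C.det := by
  simp_rw [mul_assoc, ← det_mul_row b C]
  exact det_mul_column a _

theorem det_add_replicateRow_eq_det_updateRow (A : Matrix n n R) (r : n → R) (k : n) :
    (A + replicateRow n r).det =
      ((of fun i j => A i j - A k j).updateRow k (A k + r)).det := by
  refine det_eq_of_forall_row_eq_smul_add_const (fun i => if i = k then 0 else 1) k
    (if_pos rfl) fun i j => ?_
  rcases eq_or_ne i k with rfl | hik
  · simp
  · simp [hik]
    ring

theorem det_add_smul_replicateRow (A : Matrix n n R) (r : n → R) (k : n) (t : R) :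
    (A + replicateRow n (t • r)).det =
      A.det + t * ((of fun i j => A i j - A k j).updateRow k r).det := by
  have h0 := det_add_replicateRow_eq_det_updateRow A 0 k
  rw [replicateRow_zero, add_zero, add_zero] at h0
  rw [det_add_replicateRow_eq_det_updateRow, det_updateRow_add, det_updateRow_smul, ← h0]

theorem det_add_replicateRow_add_det_sub_replicateRow (A : Matrix n n R) (r : n → R) :
    (A + replicateRow n r).det + (A - replicateRow n r).det = 2 * A.det := by
  cases isEmpty_or_nonempty n
  · norm_num [det_isEmpty]
  · obtain ⟨k⟩ := ‹Nonempty n›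
    have h := det_add_smul_replicateRow A r k
    have hsub : A - replicateRow n r = A + replicateRow n ((-1 : R) • r) := by
      ext i j
      simp [replicateRow_apply, sub_eq_add_neg]
    have h1 := h 1
    rw [one_smul] at h1
    rw [hsub, h1, h (-1)]
    ring

end

theorem det_succ_eq_mul_det_schur {K : Type*} [Field K] {n : ℕ}
    (A : Matrix (Fin (n + 1)) (Fin (n + 1)) K) (h : A 0 0 ≠ 0) :
    A.det =
      A 0 0 * (of fun i j : Fin n => A i.succ j.succ - A i.succ 0 * A 0 j.succ / A 0 0).det := by
  rw [det_eq_of_forall_row_eq_smul_add_const (B := of fun i j =>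
      if i = 0 then A 0 j else A i j - A i 0 / A 0 0 * A 0 j)
      (fun i => if i = 0 then 0 else A i 0 / A 0 0) 0 (if_pos rfl) fun i j => ?_]
  · rw [det_succ_column_zero, Fin.sum_univ_succ, Fintype.sum_eq_zero _ fun i => ?_]
    · simp [submatrix, div_mul_eq_mul_div]
    · simp [Fin.succ_ne_zero, div_mul_cancel₀ _ h]
  · rcases eq_or_ne i 0 with rfl | hi
    · simp
    · simp [hi]

theorem det_of_inv_one_add_mul {K : Type*} [Field K] :
    ∀ {n : ℕ} (u v : Fin n → K), (∀ i j, 1 + u i * v j ≠ 0) →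
    (of fun i j : Fin n => (1 + u i * v j)⁻¹).det =
      (∏ i, ∏ j ∈ Ioi i, (u i - u j)) * (∏ i, ∏ j ∈ Ioi i, (v j - v i)) *
        (∏ i, ∏ j, (1 + u i * v j))⁻¹
  | 0, _, _, _ => by simp
  | n + 1, u, v, h => by
    have hschur : (of fun i j : Fin n => (1 + u i.succ * v j.succ)⁻¹ -
        (1 + u i.succ * v 0)⁻¹ * (1 + u 0 * v j.succ)⁻¹ / (1 + u 0 * v 0)⁻¹).det =
        (∏ i : Fin n, (u 0 - u i.succ) / (1 + u i.succ * v 0)) *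
          (∏ j : Fin n, (v j.succ - v 0) / (1 + u 0 * v j.succ)) *
          (of fun i j : Fin n => (1 + u i.succ * v j.succ)⁻¹).det := by
      rw [← det_of_mul_mul]
      congr 1
      ext i j
      have h0j : 1 + v j.succ * u 0 ≠ 0 := mul_comm (u 0) _ ▸ h 0 j.succ
      simp only [of_apply]
      field_simp [h i.succ j.succ, h i.succ 0, h 0 0, h0j]
      ring
    rw [det_succ_eq_mul_det_schur _ (by simpa using inv_ne_zero (h 0 0))]
    simp only [of_apply]
    rw [hschur, det_of_inv_one_add_mul _ _ fun i j => h i.succ j.succ]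
    simp only [Fin.prod_univ_succ (n := n), Fin.prod_Ioi_zero, Fin.prod_Ioi_succ, div_eq_mul_inv,
      prod_mul_distrib, prod_inv_distrib, mul_inv]
    ring

/-- Determinant of the Cauchy-like matrix with entries (u_i+v_j)/(1+u_i v_j). -/
theorem det_cauchy_like {F : Type*} [Field F] (h2 : (2 : F) ≠ 0) (m : ℕ) (u v : Fin m → F)
    (h : ∀ i j, 1 + u i * v j ≠ 0) :
    (Matrix.of fun i j : Fin m => (u i + v j) / (1 + u i * v j)).det =
      (2 : F)⁻¹ *
        ((∏ i : Fin m, (1 + u i)) * (∏ j : Fin m, (1 + v j)) +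
          (-1) ^ m * (∏ i : Fin m, (1 - u i)) * (∏ j : Fin m, (1 - v j))) *
      (∏ i : Fin m, ∏ j ∈ Finset.Ioi i, (u i - u j)) *
      (∏ i : Fin m, ∏ j ∈ Finset.Ioi i, (v j - v i)) *
      (∏ i : Fin m, ∏ j : Fin m, (1 + u i * v j))⁻¹ := by
  set M := of fun i j : Fin m => (u i + v j) / (1 + u i * v j)
  set C := of fun i j : Fin m => (1 + u i * v j)⁻¹
  have hplus : (M + replicateRow (Fin m) 1).det =
      (∏ i, (1 + u i)) * (∏ j, (1 + v j)) * C.det := by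
    rw [← det_of_mul_mul]
    congr 1
    ext i j
    simp only [M, C, Matrix.add_apply, of_apply, replicateRow_apply, Pi.one_apply]
    field_simp [h i j]
    ring
  have hminus : (M - replicateRow (Fin m) 1).det =
      (∏ i, -(1 - u i)) * (∏ j, (1 - v j)) * C.det := by
    rw [← det_of_mul_mul]
    congr 1
    ext i j
    simp only [M, C, Matrix.sub_apply, of_apply, replicateRow_apply, Pi.one_apply]
    field_simp [h i j]
    ring
  have hsum := det_add_replicateRow_add_det_sub_replicateRow M 1
  rw [hplus, hminus, prod_neg, card_univ, Fintype.card_fin, det_of_inv_one_add_mul u v h] at hsum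
  linear_combination (-2⁻¹ : F) * hsum - M.det * inv_mul_cancel₀ h2
end

section
/- Let $x_1,\dots,x_m,y_1,\dots,y_m$ be elements of a field of characteristic $\neq 2$ with $1+x_iy_j\neq 0$, $1+x_i\neq 0$, $1+y_j\neq 0$ for all $i,j$. Let $W$ be the $(m+1)\times(m+1)$ matrix whose $(0,0)$ entry is $0$, whose remaining entries in row $0$ and column $0$ are all $1$, and whose $(i,j)$ entry for $1\le i,j\le m$ is $\frac{x_i+y_j}{1+x_iy_j}$. Then $\det W = -\frac{1}{2}\Big(\prod_{i=1}^m(1+x_i)\prod_{j=1}^m(1+y_j) - (-1)^m\prod_{i=1}^m(1-x_i)\prod_{j=1}^m(1-y_j)\Big) \cdot \prod_{1\le i<j\le m}(x_i-x_j)\prod_{1\le i<j\le m}(y_j-y_i)\prod_{i,j=1}^m(1+x_iy_j)^{-1}$. -/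
/-!
Write `W(t)` for the bordered matrix with corner entry `t`. Expanding along the first row shows
that `det W(t)` is affine in `t` with slope `det M`, so `det W(0) = (det W(1) + det W(-1)) / 2`.
For `t = ±1`, clearing the first column leaves `± det (M ∓ 1)`, and
`(x + y) / (1 + x y) ∓ 1 = ∓ (1 ∓ x) (1 ∓ y) / (1 + x y)`: both are rescalings of the Cauchy-like
matrix `(1 / (1 + xᵢ yⱼ))`. Its determinant follows by induction, since one pivot step on it
leaves the same kind of matrix, rescaled by `(x₀ - xᵢ) (yⱼ - y₀)`.
-/

open Matrix Finset

namespace Matrix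

variable {R : Type*} [CommRing R] {n : ℕ}

theorem det_succ_eq_mul_det_of_column_zero (A : Matrix (Fin (n + 1)) (Fin (n + 1)) R)
    (c : Fin n → R) (hc : ∀ i, A i.succ 0 = c i * A 0 0) :
    A.det = A 0 0 * (of fun i j : Fin n => A i.succ j.succ - c i * A 0 j.succ).det := by
  let B : Matrix (Fin (n + 1)) (Fin (n + 1)) R :=
    of fun i j => A i j - (Fin.cons 0 c : Fin (n + 1) → R) i * A 0 j
  have hAB : A.det = B.det :=
    det_eq_of_forall_row_eq_smul_add_const (Fin.cons 0 c) 0 rfl fun i j => by simp [B]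
  rw [hAB, det_succ_column_zero, Fin.sum_univ_succ]
  simp [B, hc, submatrix]

theorem det_mul_row_mul_column (a b : Fin n → R) (C : Fin n → Fin n → R) :
    (of fun i j => a i * b j * C i j).det = (∏ i, a i) * (∏ j, b j) * (of C).det :=
  calc _ = (∏ i, a i) * (of fun i j => b j * of C i j).det := by
        rw [← det_mul_column]; simp [mul_assoc]
    _ = _ := by rw [det_mul_row]; ring

def borderOnes (t : R) (A : Matrix (Fin n) (Fin n) R) : Matrix (Fin (n + 1)) (Fin (n + 1)) R :=
  of (Fin.cons (Fin.cons t fun _ => 1) fun i => Fin.cons 1 (A i))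

theorem det_borderOnes (t : R) (A : Matrix (Fin n) (Fin n) R) :
    (borderOnes t A).det = (borderOnes 0 A).det + t * A.det := by
  rw [det_succ_row_zero, det_succ_row_zero (borderOnes 0 A), Fin.sum_univ_succ, Fin.sum_univ_succ]
  simp [borderOnes, submatrix]
  exact add_comm _ _

theorem det_borderOnes_of_ne_zero {F : Type*} [Field F] {c : F} (hc : c ≠ 0)
    (A : Matrix (Fin n) (Fin n) F) :
    (borderOnes c A).det = c * (of fun i j => A i j - c⁻¹).det := by
  rw [det_succ_eq_mul_det_of_column_zero _ (fun _ => c⁻¹) fun _ => by simp [borderOnes, hc]]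
  simp [borderOnes]

end Matrix

section CauchyLike

variable {F : Type*} [Field F]

theorem inv_one_add_mul_sub_div_mul_inv {a a₀ b b₀ : F} (h : 1 + a * b ≠ 0)
    (h₀ : 1 + a * b₀ ≠ 0) (h₀' : 1 + a₀ * b ≠ 0) :
    (1 + a * b)⁻¹ - (1 + a₀ * b₀) / (1 + a * b₀) * (1 + a₀ * b)⁻¹ =
      (a₀ - a) / (1 + a * b₀) * ((b - b₀) / (1 + a₀ * b)) * (1 + a * b)⁻¹ := by
  -- `field_simp` normalizes `1 + a₀ * b` to `1 + b * a₀`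
  have h₀'' : 1 + b * a₀ ≠ 0 := by rwa [mul_comm]
  field_simp
  ring

theorem det_inv_one_add_mul {m : ℕ} (x y : Fin m → F) (h : ∀ i j, 1 + x i * y j ≠ 0) :
    (of fun i j => (1 + x i * y j)⁻¹).det =
      (∏ i, ∏ j ∈ Ioi i, (x i - x j)) * (∏ i, ∏ j ∈ Ioi i, (y j - y i)) *
        (∏ i, ∏ j, (1 + x i * y j))⁻¹ := by
  induction m with
  | zero => simp
  | succ n ih =>
    have pivot := det_succ_eq_mul_det_of_column_zero (of fun i j => (1 + x i * y j)⁻¹)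
      (fun i => (1 + x 0 * y 0) / (1 + x i.succ * y 0))
      fun i => by rw [of_apply, of_apply, div_mul_eq_mul_div, mul_inv_cancel₀ (h 0 0), one_div]
    simp only [of_apply, inv_one_add_mul_sub_div_mul_inv (h _ _) (h _ 0) (h 0 _)] at pivot
    rw [pivot, det_mul_row_mul_column,
      ih (fun i => x i.succ) (fun j => y j.succ) fun i j => h i.succ j.succ]
    simp only [Fin.prod_univ_succ, Fin.prod_Ioi_zero, Fin.prod_Ioi_succ, prod_div_distrib,
      prod_mul_distrib, mul_inv]
    ring

end CauchyLike

theorem det_bordered_cauchy_general {F : Type*} [Field F] (h2 : (2 : F) ≠ 0) (m : ℕ)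
    (x y : Fin m → F)
    (hxy : ∀ i j, 1 + x i * y j ≠ 0) :
    (Matrix.of (Fin.cons (Fin.cons (0 : F) fun _ => 1)
        (fun i => Fin.cons (1 : F) fun j => (x i + y j) / (1 + x i * y j)))).det =
      -(2 : F)⁻¹ *
        ((∏ i : Fin m, (1 + x i)) * (∏ j : Fin m, (1 + y j)) -
          (-1) ^ m * (∏ i : Fin m, (1 - x i)) * (∏ j : Fin m, (1 - y j))) *
      (∏ i : Fin m, ∏ j ∈ Finset.Ioi i, (x i - x j)) *
      (∏ i : Fin m, ∏ j ∈ Finset.Ioi i, (y j - y i)) *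
      (∏ i : Fin m, ∏ j : Fin m, (1 + x i * y j))⁻¹ := by
  set A : Matrix (Fin m) (Fin m) F := of fun i j => (x i + y j) / (1 + x i * y j)
  change (borderOnes 0 A).det = _
  have sub_one : ∀ i j, A i j - 1⁻¹ = -(1 - x i) * (1 - y j) * (1 + x i * y j)⁻¹ :=
    fun i j => by have := hxy i j; simp only [A, of_apply]; field_simp; ring
  have add_one : ∀ i j, A i j - (-1)⁻¹ = (1 + x i) * (1 + y j) * (1 + x i * y j)⁻¹ :=
    fun i j => by have := hxy i j; simp only [A, of_apply]; field_simp; ring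
  have two_mul_det : 2 * (borderOnes 0 A).det = (borderOnes 1 A).det + (borderOnes (-1) A).det := by
    rw [det_borderOnes 1, det_borderOnes (-1)]
    ring
  rw [det_borderOnes_of_ne_zero (c := 1) one_ne_zero, det_borderOnes_of_ne_zero (c := -1) (by simp),
    funext₂ sub_one, funext₂ add_one, det_mul_row_mul_column, det_mul_row_mul_column,
    det_inv_one_add_mul x y hxy, prod_neg] at two_mul_det
  rw [← inv_mul_cancel_left₀ h2 (borderOnes 0 A).det, two_mul_det, card_univ, Fintype.card_fin]
  ring

/-- Determinant of the bordered Cauchy-like matrix W_m(x,y). -/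
theorem det_bordered_cauchy {F : Type*} [Field F] (h2 : (2 : F) ≠ 0) (m : ℕ)
    (x y : Fin m → F)
    (hxy : ∀ i j, 1 + x i * y j ≠ 0)
    (hx : ∀ i, 1 + x i ≠ 0) (hy : ∀ j, 1 + y j ≠ 0) :
    (Matrix.of (Fin.cons (Fin.cons (0 : F) fun _ => 1)
        (fun i => Fin.cons (1 : F) fun j => (x i + y j) / (1 + x i * y j)))).det =
      -(2 : F)⁻¹ *
        ((∏ i : Fin m, (1 + x i)) * (∏ j : Fin m, (1 + y j)) -
          (-1) ^ m * (∏ i : Fin m, (1 - x i)) * (∏ j : Fin m, (1 - y j))) *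
      (∏ i : Fin m, ∏ j ∈ Finset.Ioi i, (x i - x j)) *
      (∏ i : Fin m, ∏ j ∈ Finset.Ioi i, (y j - y i)) *
      (∏ i : Fin m, ∏ j : Fin m, (1 + x i * y j))⁻¹ :=
  det_bordered_cauchy_general h2 m x y hxy
end

section
/- Let $p \equiv 1 \pmod 4$ be prime, $n=(p-1)/2$, $\zeta=e^{2\pi i/p}$, and let $r$ be an integer not divisible by $p$. Then $\prod_{j=1}^{n}(\zeta^{2rj}-\zeta^{-2rj}) = \left(\frac{r}{p}\right)\sqrt{p}$, where $(\tfrac{\cdot}{p})$ is the Legendre symbol and $\sqrt{p}$ is the positive square root. -/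
/-!
Write `ψ` for the standard additive character of `ZMod p`, so that the factors are
`f (2 r j)` with `f x = ψ x - ψ (-x)`. Since `f` is odd and `2 r j` is `±` an element of
`[1, p/2]`, with Gauss's count of minus signs, the product is `(2r/p) ∏_{j ≤ p/2} f j`.
Pairing `x` with `-x` in `∏_{x ≠ 0} (1 - ψ (2x)) = p` gives
`(∏_{j ≤ p/2} f j)^2 = (-1)^{p/2} p`, and `f j = 2 i sin (2πj/p)` with positive sines,
so `∏_{j ≤ p/2} f j = i^{p/2} √p`.
Finally `(2/p) i^{p/2} = 1` for `p ≡ 1 mod 4`.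
-/

open Finset

namespace ZMod

theorem prod_Icc_half_mul_of_odd {p : ℕ} [Fact p.Prime] (hp : p ≠ 2) {R : Type*} [CommRing R]
    {f : ZMod p → R} (hf : Function.Odd f) {a : ℤ} (ha : (a : ZMod p) ≠ 0) :
    ∏ x ∈ Icc 1 (p / 2), f (a * x) = legendreSym p a * ∏ x ∈ Icc 1 (p / 2), f x := by
  have hsign (y : ZMod p) :
      f y = (if y.val ≤ p / 2 then 1 else -1) * f (y.valMinAbs.natAbs : ℕ) := by
    rw [natCast_natAbs_valMinAbs]
    split_ifs <;> simp [hf y]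
  have hperm : ∏ x ∈ Ico 1 (p / 2 + 1), f ((a * x : ZMod p).valMinAbs.natAbs : ℕ) =
      ∏ x ∈ Ico 1 (p / 2 + 1), f x := by
    have h := congrArg (fun s => (s.map fun n : ℕ => f n).prod)
      (Ico_map_valMinAbs_natAbs_eq_Ico_map_id p _ ha)
    simp only [Multiset.map_map] at h
    exact h
  rw [← Ico_add_one_right_eq_Icc, gauss_lemma hp ha, prod_congr rfl fun x _ => hsign _,
    prod_mul_distrib, prod_ite, prod_const_one, prod_const, one_mul, hperm]
  simp [not_le]

theorem prod_erase_zero_eq_prod_Icc_half {n : ℕ} [NeZero n] (hn : Odd n) {M : Type*}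
    [CommMonoid M] (h : ZMod n → M) :
    ∏ x ∈ univ.erase 0, h x = ∏ j ∈ Icc 1 (n / 2), (h j * h (-j)) := by
  have hcast {k : ℕ} (hk : 0 < k) (hkn : k < n) : (k : ZMod n) ≠ 0 := by
    rw [Ne, natCast_eq_zero_iff]
    exact Nat.not_dvd_of_pos_of_lt hk hkn
  have hmaps : ∀ x ∈ univ.erase (0 : ZMod n), x.valMinAbs.natAbs ∈ Icc 1 (n / 2) := by
    intro x hx
    have := natAbs_valMinAbs_le x
    simp_all [Nat.one_le_iff_ne_zero]
  rw [← prod_fiberwise_of_maps_to hmaps]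
  refine prod_congr rfl fun j hj => ?_
  obtain ⟨hj1, hj2⟩ := mem_Icc.mp hj
  have hfiber : {x ∈ univ.erase (0 : ZMod n) | x.valMinAbs.natAbs = j} =
      {(j : ZMod n), -(j : ZMod n)} := by
    ext x
    simp only [mem_filter, mem_erase, mem_univ, and_true, mem_insert, mem_singleton]
    constructor
    · rintro ⟨-, rfl⟩
      rw [natCast_natAbs_valMinAbs]
      split_ifs <;> simp
    · rintro (rfl | rfl) <;>
        simp [valMinAbs_natCast_of_le_half hj2, hcast (k := j) (by omega) (by omega)]
  have hne : (j : ZMod n) ≠ -j := by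
    rw [Ne, eq_neg_iff_add_eq_zero, ← Nat.cast_add]
    exact hcast (by omega) (by obtain ⟨m, rfl⟩ := hn; omega)
  rw [hfiber, prod_pair hne]

end ZMod

namespace AddChar

lemma map_natCast_eq_pow {n : ℕ} {M : Type*} [CommMonoid M] (ψ : AddChar (ZMod n) M) (k : ℕ) :
    ψ k = ψ 1 ^ k := by
  rw [← map_nsmul_eq_pow, nsmul_one]

lemma odd_apply_sub_apply_neg {A R : Type*} [AddGroup A] [CommRing R] (ψ : AddChar A R) :
    Function.Odd fun x => ψ x - ψ (-x) :=
  fun x => by simp only [neg_neg, neg_sub]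

variable {R : Type*} [CommRing R] [IsDomain R] {n : ℕ} [NeZero n]

theorem prod_erase_zero_one_sub (ψ : AddChar (ZMod n) R) (hψ : IsPrimitiveRoot (ψ 1) n) :
    ∏ x ∈ univ.erase 0, (1 - ψ x) = n := by
  obtain ⟨m, rfl⟩ := Nat.exists_eq_add_one_of_ne_zero (NeZero.ne n)
  rw [Nat.cast_add_one, ← hψ.prod_one_sub_pow_eq_order]
  refine (prod_nbij' (fun k => ((k + 1 : ℕ) : ZMod (m + 1))) (fun x => x.val - 1)
    (fun k hk => ?_) (fun x hx => ?_) (fun k hk => ?_) (fun x hx => ?_)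
    (fun k _ => by rw [map_natCast_eq_pow])).symm
  · rw [mem_range] at hk
    rw [mem_erase, Ne, ZMod.natCast_eq_zero_iff]
    exact ⟨Nat.not_dvd_of_pos_of_lt (by omega) (by omega), mem_univ _⟩
  · have := x.val_lt
    rw [mem_erase, Ne, ← ZMod.val_eq_zero] at hx
    rw [mem_range]
    omega
  · rw [mem_range] at hk
    rw [ZMod.val_cast_of_lt (by omega), Nat.add_sub_cancel]
  · rw [mem_erase, Ne, ← ZMod.val_eq_zero] at hx
    rw [Nat.sub_add_cancel (by omega), ZMod.natCast_zmod_val]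

theorem prod_Icc_half_sub_neg_sq (hn : Odd n) (ψ : AddChar (ZMod n) R)
    (hψ : IsPrimitiveRoot (ψ 1) n) :
    (∏ j ∈ Icc 1 (n / 2), (ψ j - ψ (-j))) ^ 2 = (-1) ^ (n / 2) * n := by
  have hψ2 : IsPrimitiveRoot (ψ.mulShift 2 1) n := by
    rw [mulShift_apply, mul_one, ← Nat.cast_ofNat, map_natCast_eq_pow]
    exact hψ.pow_of_coprime 2 hn.coprime_two_left
  have hfactor (x : ZMod n) :
      (1 - ψ (2 * x)) * (1 - ψ (2 * -x)) = -(ψ x - ψ (-x)) ^ 2 := by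
    have hinv : ψ x * ψ (-x) = 1 := by rw [← map_add_eq_mul, add_neg_cancel, map_zero_eq_one]
    simp only [two_mul, map_add_eq_mul]
    linear_combination (ψ x * ψ (-x) - 1) * hinv
  have key := prod_erase_zero_one_sub _ hψ2
  simp only [mulShift_apply, ZMod.prod_erase_zero_eq_prod_Icc_half hn, hfactor, prod_neg,
    Nat.card_Icc, Nat.add_sub_cancel, prod_pow] at key
  rw [← key, ← mul_assoc, ← pow_add, ← two_mul, pow_mul, neg_one_sq, one_pow, one_mul]

end AddChar

namespace ZMod

open Complex Real

variable {n : ℕ} [NeZero n]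

lemma exp_two_pi_I_div_zpow (m : ℤ) :
    Complex.exp (2 * π * I / n) ^ m = stdAddChar (m : ZMod n) := by
  rw [stdAddChar_coe, ← Complex.exp_int_mul]
  ring_nf

lemma stdAddChar_intCast_eq_exp_mul_I (k : ℤ) :
    stdAddChar (k : ZMod n) = Complex.exp ((2 * π * k / n : ℝ) * I) := by
  rw [stdAddChar_coe]
  push_cast
  ring_nf

lemma stdAddChar_natCast_sub_neg (j : ℕ) :
    stdAddChar (j : ZMod n) - stdAddChar (-(j : ZMod n)) =
      I * (2 * Real.sin (2 * π * j / n) : ℝ) := by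
  rw [← Int.cast_natCast, ← Int.cast_neg, stdAddChar_intCast_eq_exp_mul_I,
    stdAddChar_intCast_eq_exp_mul_I, exp_mul_I, exp_mul_I]
  push_cast
  rw [mul_neg, neg_div, Complex.cos_neg, Complex.sin_neg]
  ring

lemma prod_Icc_half_stdAddChar_sub_neg (hn : Odd n) :
    ∏ j ∈ Icc 1 (n / 2), (stdAddChar (j : ZMod n) - stdAddChar (-(j : ZMod n))) =
      I ^ (n / 2) * Real.sqrt n := by
  set s := ∏ j ∈ Icc 1 (n / 2), 2 * Real.sin (2 * π * j / n)
  have hprod : ∏ j ∈ Icc 1 (n / 2), (stdAddChar (j : ZMod n) - stdAddChar (-(j : ZMod n))) =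
      I ^ (n / 2) * s := by
    rw [prod_congr rfl fun j _ => stdAddChar_natCast_sub_neg j, prod_mul_distrib, prod_const,
      Nat.card_Icc, Nat.add_sub_cancel, ← ofReal_prod]
  have hs : 0 < s := by
    refine prod_pos fun j hj => ?_
    obtain ⟨hj1, hj2⟩ := mem_Icc.mp hj
    have hn0 : (0 : ℝ) < n := Nat.cast_pos.mpr (NeZero.pos n)
    have hj0 : (0 : ℝ) < j := Nat.cast_pos.mpr hj1
    have hjn : (2 * j : ℝ) < n := by
      obtain ⟨m, rfl⟩ := hn
      exact_mod_cast (by omega : 2 * j < 2 * m + 1)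
    refine mul_pos two_pos (Real.sin_pos_of_pos_of_lt_pi (by positivity) ?_)
    rw [div_lt_iff₀ hn0]
    nlinarith [pi_pos]
  have hprim : IsPrimitiveRoot (stdAddChar (1 : ZMod n)) n := by
    rw [← Int.cast_one, ← exp_two_pi_I_div_zpow, zpow_one]
    exact isPrimitiveRoot_exp n (NeZero.ne n)
  have hsq := AddChar.prod_Icc_half_sub_neg_sq hn stdAddChar hprim
  rw [hprod, mul_pow, ← pow_mul, mul_comm (n / 2), pow_mul, I_sq] at hsq
  have hs2 : s ^ 2 = n := by
    exact_mod_cast mul_left_cancel₀ (pow_ne_zero _ (neg_ne_zero.mpr one_ne_zero)) hsq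
  rw [hprod, ← hs2, Real.sqrt_sq hs.le]

end ZMod

open Complex in
lemma legendreSym_two_mul_I_pow {p : ℕ} [Fact p.Prime] (hp : p % 4 = 1) :
    (legendreSym p 2 : ℂ) * I ^ (p / 2) = 1 := by
  rw [legendreSym.at_two (by omega), ZMod.χ₈_nat_eq_if_mod_eight, if_neg (by omega),
    show p / 2 = 2 * (p / 4) by omega, pow_mul, I_sq]
  rcases (by omega : p % 8 = 1 ∨ p % 8 = 5) with h | h
  · rw [if_pos (Or.inl h), Even.neg_one_pow ⟨p / 8, by omega⟩]
    norm_num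
  · rw [if_neg (by omega), Odd.neg_one_pow ⟨p / 8, by omega⟩]
    norm_num

/-- Gauss-type product evaluation for p ≡ 1 (mod 4). -/
theorem prod_zeta_pow_sub (p : ℕ) [Fact p.Prime] (hp : p % 4 = 1) (r : ℤ)
    (hr : ¬ (p : ℤ) ∣ r) :
    ∏ j ∈ Finset.Icc 1 ((p - 1) / 2),
        (Complex.exp (2 * Real.pi * Complex.I / p) ^ (2 * r * (j : ℤ)) -
          Complex.exp (2 * Real.pi * Complex.I / p) ^ (-(2 * r * (j : ℤ)))) =
      (legendreSym p r : ℂ) * (Real.sqrt p : ℂ) := by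
  have h2r : ((2 * r : ℤ) : ZMod p) ≠ 0 := by
    rw [Int.cast_mul, Int.cast_two]
    exact mul_ne_zero (Ring.two_ne_zero (by rw [ZMod.ringChar_zmod_n]; omega))
      ((ZMod.intCast_zmod_eq_zero_iff_dvd r p).not.mpr hr)
  calc _ = ∏ j ∈ Icc 1 (p / 2), (ZMod.stdAddChar (((2 * r : ℤ) : ZMod p) * (j : ZMod p)) -
        ZMod.stdAddChar (-(((2 * r : ℤ) : ZMod p) * (j : ZMod p)))) := by
        rw [show (p - 1) / 2 = p / 2 by omega]
        refine prod_congr rfl fun j _ => ?_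
        rw [ZMod.exp_two_pi_I_div_zpow, ZMod.exp_two_pi_I_div_zpow]
        push_cast
        rfl
    _ = legendreSym p (2 * r) * (Complex.I ^ (p / 2) * Real.sqrt p) := by
        rw [ZMod.prod_Icc_half_mul_of_odd (by omega) ZMod.stdAddChar.odd_apply_sub_apply_neg h2r,
          ZMod.prod_Icc_half_stdAddChar_sub_neg (Nat.odd_iff.mpr (by omega))]
    _ = _ := by
        rw [legendreSym.mul, Int.cast_mul]
        linear_combination (legendreSym p r : ℂ) * Real.sqrt p * legendreSym_two_mul_I_pow hp
end

section
/- Let $p \equiv 1 \pmod 4$ be prime, $n = (p-1)/2$, $\zeta = e^{2\pi i/p}$, and $\zeta^{1/2} = e^{\pi i/p}$. Then $\prod_{j=1}^{n}(\zeta^{j/2} - \zeta^{-j/2}) = \left(\frac{2}{p}\right)\sqrt{p} = (-1)^{(p-1)/4}\sqrt{p}$. -/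
/-!
Each factor is `ζ^{j/2} - ζ^{-j/2} = 2 i sin (π j / p)`. Taking norms in `∏_{0<k<p} (1 - ζ^k) = p`
gives `∏_{0<k<p} 2 sin (π k / p) = p`; since `sin (π (p - k) / p) = sin (π k / p)`, the positive
half product over `0 < k ≤ (p - 1) / 2` is `√p`. What remains is `i ^ ((p - 1) / 2) = (-1) ^ ((p - 1) / 4)`,
which is `(2 / p)` by the second supplementary law.
-/

open Finset Real

theorem Complex.exp_mul_I_zpow_sub_zpow_neg (θ : ℝ) (j : ℤ) :
    Complex.exp (θ * Complex.I) ^ j - Complex.exp (θ * Complex.I) ^ (-j) =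
      2 * Real.sin (j * θ) * Complex.I := by
  rw [← Complex.exp_int_mul, ← Complex.exp_int_mul, Complex.ofReal_sin, Complex.sin]
  push_cast
  ring_nf
  rw [Complex.I_sq]
  ring_nf

theorem two_mul_sin_pi_mul_div_pos {n k : ℕ} (hk0 : 0 < k) (hkn : k < n) :
    0 < 2 * sin (π * k / n) := by
  have hkn' : (k : ℝ) < n := by exact_mod_cast hkn
  have hn : (0 : ℝ) < n := by linarith [(Nat.cast_pos.mpr hk0 : (0 : ℝ) < k)]
  refine mul_pos two_pos (sin_pos_of_pos_of_lt_pi (by positivity) ?_)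
  rw [div_lt_iff₀ hn]
  nlinarith [pi_pos]

theorem norm_one_sub_exp_two_pi_I_div_pow {n k : ℕ} (hk0 : 0 < k) (hkn : k < n) :
    ‖1 - Complex.exp (2 * π * Complex.I / n) ^ k‖ = 2 * sin (π * k / n) := by
  rw [norm_sub_rev, ← Complex.exp_nat_mul,
    show (k : ℂ) * (2 * π * Complex.I / n) = Complex.I * ((2 * π * k / n : ℝ) : ℂ) by
      push_cast; ring,
    Complex.norm_exp_I_mul_ofReal_sub_one, Real.norm_eq_abs,
    show 2 * π * k / n / 2 = π * k / n by ring, abs_of_pos (two_mul_sin_pi_mul_div_pos hk0 hkn)]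

theorem prod_Ico_two_mul_sin_pi_mul_div {n : ℕ} (hn : 0 < n) :
    ∏ k ∈ Ico 1 n, 2 * sin (π * k / n) = n := by
  obtain ⟨m, rfl⟩ : ∃ m, n = m + 1 := ⟨n - 1, by omega⟩
  have hζ := Complex.isPrimitiveRoot_exp (m + 1) m.succ_ne_zero
  have hnorm := congrArg (‖·‖) hζ.prod_one_sub_pow_eq_order
  simp only [norm_prod, ← Nat.cast_succ, Complex.norm_natCast] at hnorm
  rw [prod_Ico_eq_prod_range, Nat.add_sub_cancel]
  refine (prod_congr rfl fun k hk => ?_).trans hnorm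
  rw [mem_range] at hk
  rw [norm_one_sub_exp_two_pi_I_div_pow (by omega) (by omega), add_comm 1 k]

theorem prod_Icc_two_mul_sin_pi_mul_div_of_odd {n : ℕ} (hn : Odd n) :
    ∏ k ∈ Icc 1 (n / 2), 2 * sin (π * k / n) = √n := by
  obtain ⟨m, rfl⟩ := hn
  set s : ℕ → ℝ := fun k => 2 * sin (π * k / (2 * m + 1 : ℕ))
  have hreflect : ∏ k ∈ Ico (m + 1) (2 * m + 1), s k = ∏ k ∈ Ico 1 (m + 1), s k := by
    have h := prod_Ico_reflect s 1 (m := m + 1) (n := 2 * m + 1) (by omega)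
    rw [show 2 * m + 1 + 1 - (m + 1) = m + 1 by omega, Nat.add_sub_cancel] at h
    rw [← h]
    refine prod_congr rfl fun k hk => ?_
    rw [mem_Ico] at hk
    have hn : ((2 * m + 1 : ℕ) : ℝ) ≠ 0 := Nat.cast_ne_zero.2 (by omega)
    simp only [s, Nat.cast_sub (by omega : k ≤ 2 * m + 1), mul_sub, sub_div,
      mul_div_cancel_right₀ _ hn, sin_pi_sub]
  have hsq : (∏ k ∈ Ico 1 (m + 1), s k) ^ 2 = (2 * m + 1 : ℕ) := by
    rw [sq]
    nth_rw 2 [← hreflect]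
    rw [prod_Ico_consecutive _ (by omega) (by omega)]
    exact prod_Ico_two_mul_sin_pi_mul_div (by omega)
  have hpos : 0 ≤ ∏ k ∈ Ico 1 (m + 1), s k :=
    prod_nonneg fun k hk => (two_mul_sin_pi_mul_div_pos (mem_Ico.1 hk).1 (by grind)).le
  rw [show (2 * m + 1) / 2 = m by omega, ← Ico_add_one_right_eq_Icc, ← hsq, sqrt_sq hpos]

theorem legendreSym_two_of_mod_four_eq_one {p : ℕ} [Fact p.Prime] (hp : p % 4 = 1) :
    legendreSym p 2 = (-1) ^ ((p - 1) / 4) := by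
  rw [legendreSym.at_two (by omega), ZMod.χ₈_nat_eq_if_mod_eight]
  rcases Nat.even_or_odd ((p - 1) / 4) with ⟨r, hr⟩ | ⟨r, hr⟩
  · rw [Even.neg_one_pow ⟨r, hr⟩, if_neg (by omega), if_pos (by omega)]
  · rw [Odd.neg_one_pow ⟨r, hr⟩, if_neg (by omega), if_neg (by omega)]

/-- Product of half-exponent differences equals (2/p)√p = (-1)^((p-1)/4)√p. -/
theorem prod_half_zeta (p : ℕ) [Fact p.Prime] (hp : p % 4 = 1) :
    (∏ j ∈ Finset.Icc 1 ((p - 1) / 2),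
        (Complex.exp (Real.pi * Complex.I / p) ^ (j : ℤ) -
          Complex.exp (Real.pi * Complex.I / p) ^ (-(j : ℤ)))) =
      (legendreSym p 2 : ℂ) * (Real.sqrt p : ℂ) ∧
    (∏ j ∈ Finset.Icc 1 ((p - 1) / 2),
        (Complex.exp (Real.pi * Complex.I / p) ^ (j : ℤ) -
          Complex.exp (Real.pi * Complex.I / p) ^ (-(j : ℤ)))) =
      (-1) ^ ((p - 1) / 4) * (Real.sqrt p : ℂ) := by
  have hfactor (j : ℕ) : Complex.exp (π * Complex.I / p) ^ (j : ℤ) -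
      Complex.exp (π * Complex.I / p) ^ (-(j : ℤ)) = (2 * sin (π * j / p) : ℝ) * Complex.I := by
    rw [show π * Complex.I / p = ((π / p : ℝ) : ℂ) * Complex.I by push_cast; ring,
      Complex.exp_mul_I_zpow_sub_zpow_neg]
    push_cast
    ring_nf
  have hprod : ∏ j ∈ Icc 1 ((p - 1) / 2), (Complex.exp (π * Complex.I / p) ^ (j : ℤ) -
      Complex.exp (π * Complex.I / p) ^ (-(j : ℤ))) = (-1) ^ ((p - 1) / 4) * (√p : ℂ) := by
    rw [prod_congr rfl fun j _ => hfactor j, prod_mul_distrib, prod_const, Nat.card_Icc,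
      ← Complex.ofReal_prod, show (p - 1) / 2 = p / 2 by omega,
      prod_Icc_two_mul_sin_pi_mul_div_of_odd (Nat.odd_iff.2 (by omega)),
      show p / 2 + 1 - 1 = 2 * ((p - 1) / 4) by omega, pow_mul, Complex.I_sq, mul_comm]
  refine ⟨?_, hprod⟩
  rw [hprod, legendreSym_two_of_mod_four_eq_one hp]
  norm_num
end

section
/- Let $p \equiv 1 \pmod 4$ be prime, $n=(p-1)/2$, $\zeta=e^{2\pi i/p}$. Then $\prod_{j=1}^{n}(1+\zeta^{2j}) = \zeta^{n(n+1)/2}\left(\frac{2}{p}\right)$. -/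
/-!
With `ψ` the additive character `x ↦ ζ^x` of `ZMod p` and `g x = ψ x - ψ (-x)`, one has
`g x * (1 + ψ (2x)) = ψ x * g (2x)`. The function `g` is odd, so Gauss's lemma
(multiplication by `a` permutes `1, …, (p-1)/2` up to signs whose product is `(a/p)`) gives
`∏ g (2j) = (2/p) ∏ g j`, and the `g j` are nonzero because `ψ` is injective.
-/

open Finset

namespace ZMod

variable {p : ℕ} [Fact p.Prime] {R : Type*} [CommRing R]

theorem prod_intCast_mul_eq_legendreSym_mul {a : ℤ} (hp : p ≠ 2) (ha : (a : ZMod p) ≠ 0)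
    {g : ZMod p → R} (hg : ∀ x, g (-x) = -g x) :
    ∏ x ∈ Icc 1 (p / 2), g (a * x) = legendreSym p a * ∏ x ∈ Icc 1 (p / 2), g x := by
  have hIcc : Icc 1 (p / 2) = Ico 1 (p / 2).succ := (Ico_add_one_right_eq_Icc _ _).symm
  have hsign (x : ℕ) : g (a * x) = (if (a * x : ZMod p).val ≤ p / 2 then 1 else -1) *
      g ((a * x : ZMod p).valMinAbs.natAbs) := by
    rw [natCast_natAbs_valMinAbs]
    split_ifs <;> simp [hg]
  have hperm : ∏ x ∈ Icc 1 (p / 2), g ((a * x : ZMod p).valMinAbs.natAbs) =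
      ∏ x ∈ Icc 1 (p / 2), g x := by
    have := congrArg (fun s => (s.map fun n : ℕ => g n).prod)
      (Ico_map_valMinAbs_natAbs_eq_Ico_map_id p a ha)
    simp only [Multiset.map_map] at this
    rw [hIcc]
    exact this
  rw [prod_congr rfl fun x _ => hsign x, prod_mul_distrib, hperm, prod_ite, prod_const_one,
    prod_const, one_mul, gauss_lemma hp ha, hIcc]
  simp only [not_le]
  push_cast
  rfl

theorem prod_one_add_addChar_two_mul [IsDomain R] (hp : p ≠ 2) {ψ : AddChar (ZMod p) R}
    (hψ : Function.Injective ψ) :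
    ∏ j ∈ Icc 1 (p / 2), (1 + ψ (2 * j)) = (∏ j ∈ Icc 1 (p / 2), ψ j) * legendreSym p 2 := by
  have hp_odd : p % 2 = 1 := Nat.odd_iff.mp ((Fact.out : p.Prime).odd_of_ne_two hp)
  have hp_gt : 2 < p := (Fact.out : p.Prime).two_le.lt_of_ne' hp
  have hcast_ne {m : ℕ} (h0 : 0 < m) (hm : m < p) : (m : ZMod p) ≠ 0 :=
    (natCast_eq_zero_iff _ _).not.mpr (Nat.not_dvd_of_pos_of_lt h0 hm)
  set g : ZMod p → R := fun x => ψ x - ψ (-x)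
  have hg_odd (x : ZMod p) : g (-x) = -g x := by simp [g]
  have hg_ne (j : ℕ) (hj : j ∈ Icc 1 (p / 2)) : g j ≠ 0 := by
    rw [mem_Icc] at hj
    refine sub_ne_zero.mpr fun h => hcast_ne (m := 2 * j) (by omega) (by omega) ?_
    push_cast
    linear_combination hψ h
  have hmul (x : ZMod p) : g x * (1 + ψ (2 * x)) = ψ x * g (2 * x) := by
    have h1 : ψ (-x) * ψ x = 1 := by
      rw [← AddChar.map_add_eq_mul, neg_add_cancel, AddChar.map_zero_eq_one]
    simp only [g, two_mul, neg_add, AddChar.map_add_eq_mul]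
    linear_combination (ψ (-x) - ψ x) * h1
  have h2 : ((2 : ℤ) : ZMod p) ≠ 0 := by exact_mod_cast hcast_ne two_pos hp_gt
  have hprod := prod_intCast_mul_eq_legendreSym_mul hp h2 hg_odd
  push_cast at hprod
  apply mul_left_cancel₀ (prod_ne_zero_iff.mpr hg_ne)
  rw [← prod_mul_distrib, prod_congr rfl fun (j : ℕ) _ => hmul j, prod_mul_distrib, hprod]
  ring

end ZMod

theorem Complex.exp_two_pi_mul_I_div_pow (N m : ℕ) [NeZero N] :
    Complex.exp (2 * Real.pi * Complex.I / N) ^ m = ZMod.stdAddChar (m : ZMod N) := by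
  have h := ZMod.stdAddChar_coe (N := N) m
  push_cast at h
  rw [h, ← Complex.exp_nat_mul]
  ring_nf

theorem Finset.sum_Icc_one_id (n : ℕ) : ∑ j ∈ Icc 1 n, j = n * (n + 1) / 2 := by
  have h : range (n + 1) = insert 0 (Icc 1 n) := by
    ext j
    simp only [mem_range, mem_insert, mem_Icc]
    omega
  have hrange := sum_range_id (n + 1)
  rw [h, sum_insert (by simp), zero_add, Nat.add_sub_cancel, mul_comm] at hrange
  exact hrange

/-- ∏_{j=1}^{n} (1+ζ^{2j}) = ζ^{n(n+1)/2} (2/p). -/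
theorem prod_one_add_zeta_sq (p : ℕ) [Fact p.Prime] (hp : p % 4 = 1) :
    ∏ j ∈ Finset.Icc 1 ((p - 1) / 2),
        (1 + Complex.exp (2 * Real.pi * Complex.I / p) ^ (2 * j)) =
      Complex.exp (2 * Real.pi * Complex.I / p) ^
          (((p - 1) / 2) * ((p - 1) / 2 + 1) / 2) *
        (legendreSym p 2 : ℂ) := by
  have hn : (p - 1) / 2 = p / 2 := by omega
  simp only [hn, ← sum_Icc_one_id, ← prod_pow_eq_pow_sum, Complex.exp_two_pi_mul_I_div_pow,
    Nat.cast_mul, Nat.cast_ofNat]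
  exact ZMod.prod_one_add_addChar_two_mul (by omega) ZMod.injective_stdAddChar
end

section
/- Let $p$ be an odd prime, $n=(p-1)/2$, $\zeta=e^{2\pi i/p}$, and $g(x)=\prod_{k=0}^{n}(x-\zeta^{2k})$. Then for $p\equiv 1\pmod 4$ and any integer $k$ with $1\le k\le n$: $g'(\zeta^{2k})\, g(\zeta^{-2k}) = -p\,\zeta^{-3k}\,\zeta^{(p-1)/4}\,(\zeta^{2k}-1)$. -/
/-!
Write `ω = ζ²`, a primitive `p`-th root of unity, `n = (p - 1) / 2` and `α = ω ^ k`, so that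
`g = ∏_{t ≤ n} (X - ω^t)` and `h = ∏_{n < t < p} (X - ω^t)` satisfy `g * h = X^p - 1`.
Since `α` is a root of `g`, differentiating gives `g'(α) h(α) = p α^(p-1) = p α⁻¹`.
On the other side, `α⁻¹ - ω^t = -ω^t α⁻¹ (α - ω^(-t))`, and `t ↦ p - t` maps `1..n` onto
`n+1..p-1`, so `g(α⁻¹) = (-α⁻¹)^(n+1) ω^(n(n+1)/2) (α - 1) h(α)`. Multiplying, only the root
of unity `ω^(n(n+1)/2) α^(-(n+2))` remains to be identified; for `p = 4q + 1` it is
`ζ^(q - 3k)` because its exponent differs from `q - 3k` by `(q - k) p`.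
-/

open Polynomial Finset

lemma Polynomial.eval_derivative_mul_of_isRoot {R : Type*} [CommRing R] {f g : R[X]} {a : R}
    (hf : f.IsRoot a) : (derivative (f * g)).eval a = (derivative f).eval a * g.eval a := by
  simp [derivative_mul, hf.eq_zero]

lemma Finset.prod_inv_sub {K ι : Type*} [Field K] (s : Finset ι) {a : K} (ha : a ≠ 0)
    {b : ι → K} (hb : ∀ i ∈ s, b i ≠ 0) :
    ∏ i ∈ s, (a⁻¹ - b i) = (-a⁻¹) ^ #s * (∏ i ∈ s, b i) * ∏ i ∈ s, (a - (b i)⁻¹) := by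
  rw [← prod_const, ← prod_mul_distrib, ← prod_mul_distrib]
  refine prod_congr rfl fun i hi => ?_
  field_simp [hb i hi]
  ring

namespace IsPrimitiveRoot

variable {K : Type*} [Field K] {ω : K} {N : ℕ}

lemma prod_range_mul_prod_Ico_X_sub_C (hω : IsPrimitiveRoot ω N) (hN : 0 < N) {m : ℕ}
    (hm : m ≤ N) :
    (∏ t ∈ range m, (X - C (ω ^ t))) * ∏ t ∈ Ico m N, (X - C (ω ^ t)) = X ^ N - 1 := by
  rw [prod_range_mul_prod_Ico _ hm, ← C_1, X_pow_sub_C_eq_prod hω hN (one_pow N)]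
  simp

lemma eval_derivative_prod_range_mul_eval_prod_Ico (hω : IsPrimitiveRoot ω N) {m k : ℕ}
    (hm : m ≤ N) (hk : k < m) :
    (derivative (∏ t ∈ range m, (X - C (ω ^ t)))).eval (ω ^ k) *
      (∏ t ∈ Ico m N, (X - C (ω ^ t))).eval (ω ^ k) = N * (ω ^ k)⁻¹ := by
  have hroot : (∏ t ∈ range m, (X - C (ω ^ t))).IsRoot (ω ^ k) := by
    simp only [IsRoot, eval_prod, eval_sub, eval_X, eval_C]
    exact prod_eq_zero (mem_range.mpr hk) (sub_self _)
  have hN : 0 < N := by omega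
  rw [← eval_derivative_mul_of_isRoot hroot, hω.prod_range_mul_prod_Ico_X_sub_C hN hm]
  have h1 : (ω ^ k) ^ N = 1 := by rw [← pow_mul, mul_comm, pow_mul, hω.pow_eq_one, one_pow]
  have h0 : ω ^ k ≠ 0 := pow_ne_zero k (hω.ne_zero hN.ne')
  simp only [derivative_sub, derivative_X_pow, derivative_one, sub_zero, eval_mul,
    eval_pow, eval_X, eval_C]
  rw [pow_sub₀ _ h0 hN, h1, pow_one, one_mul]

lemma inv_pow_eq_pow_sub (hω : IsPrimitiveRoot ω N) {t : ℕ} (ht : t ≤ N) :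
    (ω ^ t)⁻¹ = ω ^ (N - t) := by
  refine inv_eq_of_mul_eq_one_right ?_
  rw [← pow_add, Nat.add_sub_cancel' ht, hω.pow_eq_one]

lemma prod_range_succ_sub_inv (hω : IsPrimitiveRoot ω N) {m : ℕ} (hm : m < N) (a : K) :
    ∏ t ∈ range (m + 1), (a - (ω ^ t)⁻¹) = (a - 1) * ∏ t ∈ Ico (N - m) N, (a - ω ^ t) := by
  rw [prod_range_succ', pow_zero, inv_one, mul_comm]
  congr 1
  have := prod_Ico_reflect (fun t => a - ω ^ t) 1 (show m + 1 ≤ N + 1 by omega)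
  rw [Nat.add_sub_cancel, Nat.add_sub_add_right, prod_Ico_eq_prod_range, Nat.add_sub_cancel]
    at this
  rw [← this]
  refine prod_congr rfl fun t ht => ?_
  rw [hω.inv_pow_eq_pow_sub (by grind), add_comm]

theorem eval_derivative_mul_eval_inv {n k : ℕ} (hω : IsPrimitiveRoot ω (2 * n + 1))
    (hk : k ≤ n) :
    (derivative (∏ t ∈ range (n + 1), (X - C (ω ^ t)))).eval (ω ^ k) *
        (∏ t ∈ range (n + 1), (X - C (ω ^ t))).eval (ω ^ k)⁻¹ =
      (-1) ^ (n + 1) * (2 * n + 1) * ω ^ ((n + 1) * n / 2) * ((ω ^ k) ^ (n + 2))⁻¹ *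
        (ω ^ k - 1) := by
  set α := ω ^ k
  set h := ∏ t ∈ Ico (n + 1) (2 * n + 1), (X - C (ω ^ t))
  have hω0 : ω ≠ 0 := hω.ne_zero (by omega)
  have hα0 : α ≠ 0 := pow_ne_zero k hω0
  have hg_inv : (∏ t ∈ range (n + 1), (X - C (ω ^ t))).eval α⁻¹ =
      (-α⁻¹) ^ (n + 1) * ω ^ ((n + 1) * n / 2) * ((α - 1) * h.eval α) := by
    simp only [eval_prod, eval_sub, eval_X, eval_C, h]
    rw [prod_inv_sub _ hα0 fun t _ => pow_ne_zero t hω0, card_range, prod_pow_eq_pow_sum,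
      sum_range_id, Nat.add_sub_cancel, hω.prod_range_succ_sub_inv (by omega),
      show 2 * n + 1 - n = n + 1 by omega]
  have hd := hω.eval_derivative_prod_range_mul_eval_prod_Ico (by omega) (Nat.lt_succ_of_le hk)
  calc _ = (-α⁻¹) ^ (n + 1) * ω ^ ((n + 1) * n / 2) * (α - 1) *
        ((derivative (∏ t ∈ range (n + 1), (X - C (ω ^ t)))).eval α * h.eval α) := by
        rw [hg_inv]; ring
    _ = _ := by
        rw [hd, neg_pow, inv_pow, pow_succ α (n + 1), mul_inv]
        push_cast
        ring

lemma sq_pow_eq_of_four_mul_add_one {q : ℕ} (hω : IsPrimitiveRoot ω (4 * q + 1)) (k : ℕ) :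
    (ω ^ 2) ^ ((2 * q + 1) * q) =
      ω ^ (-(3 * (k : ℤ))) * ω ^ q * ((ω ^ 2) ^ k) ^ (2 * q + 2) := by
  have hω0 : ω ≠ 0 := hω.ne_zero (by omega)
  calc (ω ^ 2) ^ ((2 * q + 1) * q)
      = ω ^ ((-(3 * (k : ℤ)) + q + 2 * k * (2 * q + 2)) + (4 * q + 1 : ℕ) * (q - k)) := by
        rw [← pow_mul, ← zpow_natCast]
        congr 1
        push_cast
        ring
    _ = ω ^ (-(3 * (k : ℤ)) + q + 2 * k * (2 * q + 2)) := by
        rw [zpow_add₀ hω0, zpow_mul, zpow_natCast, hω.pow_eq_one, one_zpow, mul_one]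
    _ = _ := by
        rw [zpow_add₀ hω0, zpow_add₀ hω0, ← pow_mul, ← pow_mul, ← mul_assoc]
        norm_cast

end IsPrimitiveRoot

theorem deriv_g_mul_g_general (p : ℕ) (hp4 : p % 4 = 1) (k : ℕ)
    (hk : k ≤ (p - 1) / 2) :
    let ζ : ℂ := Complex.exp (2 * Real.pi * Complex.I / p)
    let g : Polynomial ℂ := ∏ t ∈ Finset.range ((p - 1) / 2 + 1), (X - C (ζ ^ (2 * t)))
    (Polynomial.derivative g).eval (ζ ^ (2 * k)) * g.eval (ζ ^ (-(2 * (k : ℤ)))) =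
      -(p : ℂ) * ζ ^ (-(3 * (k : ℤ))) * ζ ^ ((p - 1) / 4) * (ζ ^ (2 * k) - 1) := by
  intro ζ g
  obtain ⟨q, hpq⟩ : ∃ q, p = 4 * q + 1 := ⟨p / 4, by omega⟩
  have hζ : IsPrimitiveRoot ζ (4 * q + 1) := hpq ▸ Complex.isPrimitiveRoot_exp p (by omega)
  have hω : IsPrimitiveRoot (ζ ^ 2) (2 * (2 * q) + 1) := by
    rw [show 2 * (2 * q) + 1 = 4 * q + 1 by ring]
    exact hζ.pow_of_coprime 2 (Nat.coprime_two_left.mpr ⟨2 * q, by ring⟩)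
  have hg : g = ∏ t ∈ range (2 * q + 1), (X - C ((ζ ^ 2) ^ t)) := by
    simp only [g, show (p - 1) / 2 = 2 * q by omega, pow_mul]
  have hinv : ζ ^ (-(2 * (k : ℤ))) = ((ζ ^ 2) ^ k)⁻¹ := by
    rw [zpow_neg, ← pow_mul]
    norm_cast
  have hhalf : (2 * q + 1) * (2 * q) / 2 = (2 * q + 1) * q := by
    rw [Nat.mul_div_assoc _ (dvd_mul_right 2 q), Nat.mul_div_cancel_left q two_pos]
  rw [hg, hinv, pow_mul ζ 2 k, hω.eval_derivative_mul_eval_inv (by omega), hhalf,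
    hζ.sq_pow_eq_of_four_mul_add_one k, show (p - 1) / 4 = q by omega, hpq]
  have hα0 : (ζ ^ 2) ^ k ≠ 0 := pow_ne_zero k (pow_ne_zero 2 (hζ.ne_zero (by omega)))
  rw [Odd.neg_one_pow ⟨q, rfl⟩]
  field_simp
  push_cast
  ring

/-- Evaluation of g'(ζ^{2k}) g(ζ^{-2k}) for p ≡ 1 (mod 4). -/
theorem deriv_g_mul_g (p : ℕ) (hp : p.Prime) (hp4 : p % 4 = 1) (k : ℕ)
    (hk1 : 1 ≤ k) (hk : k ≤ (p - 1) / 2) :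
    let ζ : ℂ := Complex.exp (2 * Real.pi * Complex.I / p)
    let g : Polynomial ℂ := ∏ t ∈ Finset.range ((p - 1) / 2 + 1), (X - C (ζ ^ (2 * t)))
    (Polynomial.derivative g).eval (ζ ^ (2 * k)) * g.eval (ζ ^ (-(2 * (k : ℤ)))) =
      -(p : ℂ) * ζ ^ (-(3 * (k : ℤ))) * ζ ^ ((p - 1) / 4) * (ζ ^ (2 * k) - 1) :=
  deriv_g_mul_g_general p hp4 k hk
end
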